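/- Let (L, [−,−], ·, ε, α) be a Hom-post-Lie color algebra. Then the product x∗y = x·y + ½[x,y] satisfies the ε-Hom-Jacobi identity for the bracket ⟨x,y⟩ = x∗y − ε(x,y)y∗x, i.e., (L, ∗, ε, α) is color Hom-Lie admissible. -/
import Mathlib


section
variable {K G A : Type*} [Field K] [AddCommGroup G] [AddCommGroup A] [Module K A]

/-- x ∗ y = x · y + ½ [x, y]. -/
def pStar (dot br : A →ₗ[K] A →ₗ[K] A) (h : K) (x y : A) : A :=
  dot x y + h • br x y

/-- ε-commutator of ∗ on homogeneous elements of degrees a, b. -/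
def pComm (ε : G → G → K) (dot br : A →ₗ[K] A →ₗ[K] A) (h : K) (a b : G) (x y : A) : A :=
  pStar dot br h x y - ε a b • pStar dot br h y x

end

set_option maxHeartbeats 4000000 in
/-- for a Hom-post-Lie color algebra, the product
x ∗ y = x·y + ½[x,y] is color Hom-Lie admissible: its ε-commutator satisfies the
ε-Hom-Jacobi identity. -/
theorem stmt_14 {K G A : Type*} [Field K] [AddCommGroup G] [AddCommGroup A] [Module K A]
    (ε : G → G → K) (𝒜 : G → Submodule K A)
    (hchar : (2 : K) ≠ 0)
    (hεs : ∀ a b, ε a b * ε b a = 1)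
    (hεr : ∀ a b c, ε a (b + c) = ε a b * ε a c)
    (hεl : ∀ a b c, ε (a + b) c = ε a c * ε b c)
    (br dot : A →ₗ[K] A →ₗ[K] A) (α : A →ₗ[K] A)
    (hbr : ∀ a b : G, ∀ x ∈ 𝒜 a, ∀ y ∈ 𝒜 b, br x y ∈ 𝒜 (a + b))
    (hdot : ∀ a b : G, ∀ x ∈ 𝒜 a, ∀ y ∈ 𝒜 b, dot x y ∈ 𝒜 (a + b))
    (hα : ∀ a : G, ∀ x ∈ 𝒜 a, α x ∈ 𝒜 a)
    -- (L, [−,−], ε, α) is a Hom-Lie color algebra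
    (hskew : ∀ a b : G, ∀ x ∈ 𝒜 a, ∀ y ∈ 𝒜 b, br x y = -(ε a b • br y x))
    (hjac : ∀ a b c : G, ∀ x ∈ 𝒜 a, ∀ y ∈ 𝒜 b, ∀ z ∈ 𝒜 c,
      ε c a • br (α x) (br y z) + ε a b • br (α y) (br z x)
        + ε b c • br (α z) (br x y) = 0)
    -- Hom-post-Lie color algebra axioms
    (hpl1 : ∀ a b c : G, ∀ x ∈ 𝒜 a, ∀ y ∈ 𝒜 b, ∀ z ∈ 𝒜 c,
      dot (α z) (br x y) - br (dot z x) (α y) - ε c a • br (α x) (dot z y) = 0)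
    (hpl2 : ∀ a b c : G, ∀ x ∈ 𝒜 a, ∀ y ∈ 𝒜 b, ∀ z ∈ 𝒜 c,
      dot (α z) (dot y x) - ε c b • dot (α y) (dot z x)
        + ε c b • dot (dot y z) (α x) - dot (dot z y) (α x)
        + ε c b • dot (br y z) (α x) = 0) :
    -- ε-Hom-Jacobi identity for the commutator of ∗
    ∀ a b c : G, ∀ x ∈ 𝒜 a, ∀ y ∈ 𝒜 b, ∀ z ∈ 𝒜 c,
      ε c a • pComm ε dot br (2 : K)⁻¹ a (b + c) (α x) (pComm ε dot br (2 : K)⁻¹ b c y z)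
        + ε a b • pComm ε dot br (2 : K)⁻¹ b (c + a) (α y) (pComm ε dot br (2 : K)⁻¹ c a z x)
        + ε b c • pComm ε dot br (2 : K)⁻¹ c (a + b) (α z) (pComm ε dot br (2 : K)⁻¹ a b x y)
        = 0 := by
  intro a b c x hx y hy z hz
  -- nonzeroness of ε values
  have h4 : (4 : K) ≠ 0 := by
    have h := mul_ne_zero hchar hchar
    norm_num at h ⊢
    exact h
  have hA : ε a b ≠ 0 := left_ne_zero_of_mul_eq_one (hεs a b)
  have hB : ε b c ≠ 0 := left_ne_zero_of_mul_eq_one (hεs b c)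
  have hC : ε a c ≠ 0 := left_ne_zero_of_mul_eq_one (hεs a c)
  -- inverse identities
  have hba : ε b a = (ε a b)⁻¹ := eq_inv_of_mul_eq_one_right (hεs a b)
  have hcb : ε c b = (ε b c)⁻¹ := eq_inv_of_mul_eq_one_right (hεs b c)
  have hca : ε c a = (ε a c)⁻¹ := eq_inv_of_mul_eq_one_right (hεs a c)
  -- Jacobi instances
  have J1 := hjac a b c x hx y hy z hz
  have J2 := hjac a c b x hx z hz y hy
  -- hpl1 instances
  have p1xyz := hpl1 a b c x hx y hy z hz
  have p1xzy := hpl1 a c b x hx z hz y hy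
  have p1yxz := hpl1 b a c y hy x hx z hz
  have p1yzx := hpl1 b c a y hy z hz x hx
  have p1zxy := hpl1 c a b z hz x hx y hy
  have p1zyx := hpl1 c b a z hz y hy x hx
  -- hpl2 instances
  have p2xyz := hpl2 a b c x hx y hy z hz
  have p2xzy := hpl2 a c b x hx z hz y hy
  have p2yxz := hpl2 b a c y hy x hx z hz
  have p2yzx := hpl2 b c a y hy z hz x hx
  have p2zxy := hpl2 c a b z hz x hx y hy
  have p2zyx := hpl2 c b a z hz y hy x hx
  -- skewness instances for br applied to br
  have skxyz : br (br y z) (α x) = -((ε b a * ε c a) • br (α x) (br y z)) := by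
    have h := hskew (b + c) a (br y z) (hbr b c y hy z hz) (α x) (hα a x hx)
    rwa [hεl b c a] at h
  have skxzy : br (br z y) (α x) = -((ε c a * ε b a) • br (α x) (br z y)) := by
    have h := hskew (c + b) a (br z y) (hbr c b z hz y hy) (α x) (hα a x hx)
    rwa [hεl c b a] at h
  have skyxz : br (br x z) (α y) = -((ε a b * ε c b) • br (α y) (br x z)) := by
    have h := hskew (a + c) b (br x z) (hbr a c x hx z hz) (α y) (hα b y hy)
    rwa [hεl a c b] at h
  have skyzx : br (br z x) (α y) = -((ε c b * ε a b) • br (α y) (br z x)) := by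
    have h := hskew (c + a) b (br z x) (hbr c a z hz x hx) (α y) (hα b y hy)
    rwa [hεl c a b] at h
  have skzxy : br (br x y) (α z) = -((ε a c * ε b c) • br (α z) (br x y)) := by
    have h := hskew (a + b) c (br x y) (hbr a b x hx y hy) (α z) (hα c z hz)
    rwa [hεl a b c] at h
  have skzyx : br (br y x) (α z) = -((ε b c * ε a c) • br (α z) (br y x)) := by
    have h := hskew (b + a) c (br y x) (hbr b a y hy x hx) (α z) (hα c z hz)
    rwa [hεl b a c] at h
  -- normalize ε occurrences
  rw [hba] at J2 p1xzy p2zxy skxyz skxzy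
  rw [hcb] at J2 p1yxz p2xyz skyxz skyzx
  rw [hca] at J1 p1xyz p2yxz skxyz skxzy
  simp only [pComm, pStar, hεr a b c, hεr b c a, hεr c a b, hba, hcb, hca, map_add, map_sub,
      map_smul, map_neg, LinearMap.add_apply, LinearMap.sub_apply, LinearMap.smul_apply,
      LinearMap.neg_apply, smul_add, smul_sub, smul_neg, smul_smul]
  linear_combination (norm :=
      (match_scalars <;> field_simp <;> ring))
    ((2:K)⁻¹) • J1
    - ((2:K)⁻¹ * (ε a b * ε b c * (ε a c)⁻¹)) • J2
    + ((2:K)⁻¹ * ε b c) • p1xyz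
    - ((2:K)⁻¹ * (ε a b * (ε a c)⁻¹)) • p1xzy
    - ((2:K)⁻¹ * (ε a b * ε b c)) • p1yxz
    + ((2:K)⁻¹ * (ε a c)⁻¹) • p1yzx
    + ((2:K)⁻¹ * ε a b) • p1zxy
    - ((2:K)⁻¹ * (ε b c * (ε a c)⁻¹)) • p1zyx
    - ((2:K)⁻¹ * (ε a b * ε b c)) • p2xyz
    + ((2:K)⁻¹ * ε a b) • p2xzy
    + ((2:K)⁻¹ * ε b c) • p2yxz
    - ((2:K)⁻¹ * (ε b c * (ε a c)⁻¹)) • p2yzx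
    - ((2:K)⁻¹ * (ε a b * (ε a c)⁻¹)) • p2zxy
    + ((2:K)⁻¹ * (ε a c)⁻¹) • p2zyx
    - ((4:K)⁻¹ * ε a b) • skxyz
    + ((4:K)⁻¹ * (ε a b * ε b c)) • skxzy
    + ((4:K)⁻¹ * (ε b c * (ε a c)⁻¹)) • skyxz
    - ((4:K)⁻¹ * ε b c) • skyzx
    - ((4:K)⁻¹ * (ε a c)⁻¹) • skzxy
    + ((4:K)⁻¹ * (ε a b * (ε a c)⁻¹)) • skzyx
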